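/- arXiv:2207.11765 — 2 statements merged into one kernel-verified Lean document; each statement's English description precedes it below -/
import Mathlib

section
/- For any context-free grammar G and any nonterminal X, a terminal a belongs to First(X) (the least fixed point of the First equations) if and only if there exists a derivation X ⇒* aβ for some string β ∈ (V ∪ Σ)*. -/
open Classical

universe uT uN
variable {T : Type uT}

/-- The context-free grammar of the older Mathlib, with nonterminals in an arbitrary universe. -/
structure ContextFreeGrammarU.{uN', uT'} (T : Type uT') where
  /-- Type of nonterminals. -/
  NT : Type uN'
  /-- Initial nonterminal. -/
  initial : NT
  /-- Rewrite rules. -/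
  rules : Finset (ContextFreeRule T NT)

/-- One step of a context-free transformation by a rule of `g`. -/
def ContextFreeGrammarU.Produces (g : ContextFreeGrammarU.{uN} T) (u v : List (Symbol T g.NT)) :
    Prop :=
  ∃ r ∈ g.rules, r.Rewrites u v

/-- `g` can transform `u` to `v` in some number of rewriting steps. -/
abbrev ContextFreeGrammarU.Derives (g : ContextFreeGrammarU.{uN} T) :
    List (Symbol T g.NT) → List (Symbol T g.NT) → Prop :=
  Relation.ReflTransGen g.Produces

/-- `First` of a sentential form, relative to a candidate assignment `f` of
`First` sets (subsets of Σ ∪ {ε}, encoded as `Set (Option T)` with `none` for ε)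
to nonterminals. -/
noncomputable def firstStr {N : Type uN} (f : N → Set (Option T)) :
    List (Symbol T N) → Set (Option T)
  | [] => {none}
  | Symbol.terminal a :: _ => {some a}
  | Symbol.nonterminal X :: rest =>
      (f X \ {none}) ∪ (if none ∈ f X then firstStr f rest else ∅)

/-- The one-step operator for the standard `First`-set fixed-point equations. -/
noncomputable def firstOp (g : ContextFreeGrammarU.{uN} T) :
    (g.NT → Set (Option T)) → (g.NT → Set (Option T)) :=
  fun f X => ⋃ r ∈ {r : ContextFreeRule T g.NT | r ∈ g.rules ∧ r.input = X},
    firstStr f r.output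

/-- The `First` sets, as the least fixed point (Knaster–Tarski) of `firstOp`. -/
noncomputable def firstLfp (g : ContextFreeGrammarU.{uN} T) : g.NT → Set (Option T) :=
  sInf {f : g.NT → Set (Option T) | firstOp g f ≤ f}

/-!
Both inclusions compare `firstLfp g` with a prefixed point of `firstOp g`. The sets
`{a | X ⇒* a β} ∪ {ε | X ⇒* ε}` form a prefixed point, so by minimality they contain `First(X)`.
Conversely, for any prefixed point `f`, the set `firstStr f γ` can only shrink along a derivation
`γ ⇒* δ`: a rewrite replaces a nonterminal `Y` by the right-hand side of one of its rules,
whose `First` set lies in `f Y`. Hence `X ⇒* a β` puts `a ∈ firstStr f (a β) ⊆ firstStr f [X] = f X`.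
-/

noncomputable def firstConcat (s t : Set (Option T)) : Set (Option T) :=
  (s \ {none}) ∪ (if none ∈ s then t else ∅)

theorem firstConcat_mono {s s' t t' : Set (Option T)} (hs : s ⊆ s') (ht : t ⊆ t') :
    firstConcat s t ⊆ firstConcat s' t' := by
  refine Set.union_subset_union (Set.sdiff_subset_sdiff_left hs) ?_
  split_ifs with h h'
  exacts [ht, absurd (hs h) h', Set.empty_subset _, Set.empty_subset _]

theorem firstConcat_assoc (s t u : Set (Option T)) :
    firstConcat (firstConcat s t) u = firstConcat s (firstConcat t u) := by
  unfold firstConcat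
  by_cases hs : none ∈ s <;> by_cases ht : none ∈ t <;> ext o <;> simp [hs, ht]; tauto

theorem singleton_none_firstConcat (t : Set (Option T)) : firstConcat {none} t = t := by
  simp [firstConcat]

theorem singleton_some_firstConcat (a : T) (t : Set (Option T)) :
    firstConcat {some a} t = {some a} := by
  simp [firstConcat]

theorem firstConcat_singleton_none (s : Set (Option T)) : firstConcat s {none} = s := by
  unfold firstConcat
  by_cases h : none ∈ s <;> ext (_ | a) <;> simp [h]

section firstStr

variable {N : Type uN} (f : N → Set (Option T))

theorem firstStr_cons_nonterminal (X : N) (γ : List (Symbol T N)) :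
    firstStr f (Symbol.nonterminal X :: γ) = firstConcat (f X) (firstStr f γ) :=
  rfl

theorem firstStr_append (γ δ : List (Symbol T N)) :
    firstStr f (γ ++ δ) = firstConcat (firstStr f γ) (firstStr f δ) := by
  induction γ with
  | nil => exact (singleton_none_firstConcat _).symm
  | cons s γ ih =>
    cases s with
    | terminal a => exact (singleton_some_firstConcat a _).symm
    | nonterminal X =>
      rw [List.cons_append, firstStr_cons_nonterminal, firstStr_cons_nonterminal, ih,
        firstConcat_assoc]

theorem firstStr_singleton_nonterminal (X : N) :
    firstStr f [Symbol.nonterminal X] = f X :=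
  firstConcat_singleton_none (f X)

variable {f} in
theorem firstStr_mono {f' : N → Set (Option T)} (hf : f ≤ f') (γ : List (Symbol T N)) :
    firstStr f γ ⊆ firstStr f' γ := by
  induction γ with
  | nil => exact subset_rfl
  | cons s γ ih =>
    cases s with
    | terminal a => exact subset_rfl
    | nonterminal X => exact firstConcat_mono (hf X) ih

end firstStr

namespace ContextFreeGrammarU

variable {g : ContextFreeGrammarU.{uN} T}

theorem Derives.append_right {u v : List (Symbol T g.NT)} (h : g.Derives u v)
    (p : List (Symbol T g.NT)) : g.Derives (u ++ p) (v ++ p) := by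
  induction h with
  | refl => exact Relation.ReflTransGen.refl
  | tail _ hs ih =>
    obtain ⟨r, hr, hrw⟩ := hs
    exact ih.tail ⟨r, hr, hrw.append_right p⟩

variable (g)

theorem firstOp_mono : Monotone (firstOp g) :=
  fun _ _ hf _ => Set.iUnion₂_mono fun r _ => firstStr_mono hf r.output

theorem firstLfp_le {f : g.NT → Set (Option T)} (hf : firstOp g f ≤ f) : firstLfp g ≤ f :=
  OrderHom.lfp_le ⟨firstOp g, firstOp_mono g⟩ hf

theorem firstOp_firstLfp : firstOp g (firstLfp g) = firstLfp g :=
  OrderHom.map_lfp ⟨firstOp g, firstOp_mono g⟩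

variable {g}

theorem firstStr_output_subset {f : g.NT → Set (Option T)} (hf : firstOp g f ≤ f)
    {r : ContextFreeRule T g.NT} (hr : r ∈ g.rules) : firstStr f r.output ⊆ f r.input :=
  fun _ ho => hf r.input (Set.mem_biUnion ⟨hr, rfl⟩ ho)

theorem firstStr_subset_of_produces {f : g.NT → Set (Option T)} (hf : firstOp g f ≤ f)
    {u v : List (Symbol T g.NT)} (huv : g.Produces u v) : firstStr f v ⊆ firstStr f u := by
  obtain ⟨r, hr, hrw⟩ := huv
  obtain ⟨p, q, rfl, rfl⟩ := hrw.exists_parts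
  simp only [List.append_assoc, firstStr_append, firstStr_singleton_nonterminal]
  exact firstConcat_mono subset_rfl (firstConcat_mono (firstStr_output_subset hf hr) subset_rfl)

theorem firstStr_subset_of_derives {f : g.NT → Set (Option T)} (hf : firstOp g f ≤ f)
    {u v : List (Symbol T g.NT)} (huv : g.Derives u v) : firstStr f v ⊆ firstStr f u := by
  induction huv with
  | refl => exact subset_rfl
  | tail _ huv ih => exact (firstStr_subset_of_produces hf huv).trans ih

variable (g)

def DerivesFirst (γ : List (Symbol T g.NT)) : Option T → Prop
  | none => g.Derives γ []
  | some a => ∃ β, g.Derives γ (Symbol.terminal a :: β)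

def derivedFirst (X : g.NT) : Set (Option T) :=
  {o | g.DerivesFirst [Symbol.nonterminal X] o}

variable {g}

theorem DerivesFirst.of_derives {γ δ : List (Symbol T g.NT)} (h : g.Derives γ δ) :
    ∀ {o}, g.DerivesFirst δ o → g.DerivesFirst γ o
  | none, hδ => h.trans hδ
  | some _, ⟨β, hδ⟩ => ⟨β, h.trans hδ⟩

theorem derivesFirst_cons_of_derivedFirst {Y : g.NT} {a : T} (hY : some a ∈ derivedFirst g Y)
    (γ : List (Symbol T g.NT)) : g.DerivesFirst (Symbol.nonterminal Y :: γ) (some a) := by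
  obtain ⟨β, hβ⟩ := hY
  exact ⟨β ++ γ, hβ.append_right γ⟩

theorem derivesFirst_of_mem_firstStr {γ : List (Symbol T g.NT)} {o : Option T}
    (ho : o ∈ firstStr (derivedFirst g) γ) : g.DerivesFirst γ o := by
  induction γ with
  | nil =>
    rw [Set.mem_singleton_iff.mp ho]
    exact Relation.ReflTransGen.refl
  | cons s γ ih =>
    cases s with
    | terminal b =>
      rw [Set.mem_singleton_iff.mp ho]
      exact ⟨γ, Relation.ReflTransGen.refl⟩
    | nonterminal Y =>
      rcases ho with ⟨hY, hne⟩ | ho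
      · obtain ⟨a, rfl⟩ := Option.ne_none_iff_exists'.mp hne
        exact derivesFirst_cons_of_derivedFirst hY γ
      · split_ifs at ho with hY
        · exact (ih ho).of_derives (Derives.append_right hY γ)
        · exact absurd ho (Set.notMem_empty o)

variable (g)

theorem firstOp_derivedFirst_le : firstOp g (derivedFirst g) ≤ derivedFirst g := by
  intro X o ho
  simp only [firstOp, Set.mem_iUnion] at ho
  obtain ⟨r, ⟨hr, rfl⟩, ho⟩ := ho
  have hstep : g.Derives [Symbol.nonterminal r.input] r.output :=
    Relation.ReflTransGen.single ⟨r, hr, ContextFreeRule.Rewrites.input_output⟩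
  exact (derivesFirst_of_mem_firstStr ho).of_derives hstep

end ContextFreeGrammarU

/-- A terminal `a` belongs to `First(X)` iff `X ⇒* a β` for some sentential form β. -/
theorem mem_firstLfp_iff_derives (g : ContextFreeGrammarU.{uN} T) (X : g.NT) (a : T) :
    some a ∈ firstLfp g X ↔
      ∃ β : List (Symbol T g.NT),
        g.Derives [Symbol.nonterminal X] (Symbol.terminal a :: β) := by
  constructor
  · exact fun ha => g.firstLfp_le g.firstOp_derivedFirst_le X ha
  · rintro ⟨β, hβ⟩
    have ha : some a ∈ firstStr (firstLfp g) (Symbol.terminal a :: β) := rfl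
    rw [← firstStr_singleton_nonterminal (firstLfp g) X]
    exact ContextFreeGrammarU.firstStr_subset_of_derives g.firstOp_firstLfp.le hβ ha
end

section
/- In the candidate enumeration transition system, every accepted generated token sequence T_gen has reliable subsequence exactly equal to T_rel: if ⟨A₀, [], T_rel⟩ →* ⟨a:A, T_gen, []⟩ → accept using the rules T-Unreliable-Terminal, T-Reliable-Terminal, T-Non-Terminal, then the subsequence of T_gen consisting of reliable tokens (tokens not in U) equals T_rel. -/
open Classical

universe uT uN
variable {T : Type uT}

/-- Context-free grammar with the universe-polymorphic type of nonterminals, as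
`ContextFreeGrammar` was defined in Mathlib of December 2024. -/
structure ContextFreeGrammarPoly.{u, v} (T : Type v) where
  /-- Type of nonterminals. -/
  NT : Type u
  /-- Initial nonterminal. -/
  initial : NT
  /-- Rewrite rules. -/
  rules : Finset (ContextFreeRule T NT)

/-- States of the candidate-enumeration transition system: a parsing stack `A`
over `V ∪ Σ`, the generated tokens `T_gen`, and the remaining required reliable
tokens `T_rel`. -/
abbrev EnumState (g : ContextFreeGrammarPoly.{uN} T) :=
  List (Symbol T g.NT) × List T × List T

/-- Transition rules of the candidate enumerator:
* `T-Unreliable-Terminal`: pop an unreliable terminal from the stack and append it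
  to `T_gen`;
* `T-Reliable-Terminal`: pop a reliable terminal matching the head of `T_rel`,
  appending it to `T_gen`;
* `T-Non-Terminal`: replace a nonterminal on top of the stack by the right-hand
  side of one of its productions. -/
inductive EnumStep (g : ContextFreeGrammarPoly.{uN} T) (U : Set T) :
    EnumState g → EnumState g → Prop
  | unreliable {A : List (Symbol T g.NT)} {Tg Tr : List T} {a : T} (ha : a ∈ U) :
      EnumStep g U (Symbol.terminal a :: A, Tg, Tr) (A, Tg ++ [a], Tr)
  | reliable {A : List (Symbol T g.NT)} {Tg Tr : List T} {a : T} (ha : a ∉ U) :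
      EnumStep g U (Symbol.terminal a :: A, Tg, a :: Tr) (A, Tg ++ [a], Tr)
  | expand {A : List (Symbol T g.NT)} {Tg Tr : List T}
      (r : ContextFreeRule T g.NT) (hr : r ∈ g.rules) :
      EnumStep g U (Symbol.nonterminal r.input :: A, Tg, Tr) (r.output ++ A, Tg, Tr)

/-! The reliable tokens generated so far, followed by the reliable tokens still required, form a
list that no transition changes: `T-Reliable-Terminal` moves one token from the second part to the
first, and the other two rules touch neither part. At the start this list is `T_rel`; on
acceptance it is the reliable subsequence of `T_gen`. -/

noncomputable def EnumState.reliableTrace {g : ContextFreeGrammarPoly.{uN} T} (U : Set T) (s : EnumState g) :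
    List T :=
  s.2.1.filter (fun a => decide (a ∉ U)) ++ s.2.2

namespace EnumStep

variable {g : ContextFreeGrammarPoly.{uN} T} {U : Set T}

theorem reliableTrace_eq {s s' : EnumState g} (h : EnumStep g U s s') :
    s.reliableTrace U = s'.reliableTrace U := by
  cases h with
  | unreliable ha => simp [EnumState.reliableTrace, ha]
  | reliable ha => simp [EnumState.reliableTrace, ha]
  | expand => rfl

theorem reliableTrace_eq_of_reflTransGen {s s' : EnumState g}
    (h : Relation.ReflTransGen (EnumStep g U) s s') :
    s.reliableTrace U = s'.reliableTrace U := by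
  induction h with
  | refl => rfl
  | tail _ hstep ih => exact ih.trans (reliableTrace_eq hstep)

end EnumStep

/-- Every accepted generated token sequence has reliable subsequence exactly
`T_rel`: if from `⟨A₀, [], T_rel⟩` the enumerator reaches a state `⟨A, T_gen, []⟩`
(where `T-Accept` fires), then the subsequence of `T_gen` consisting of the tokens
not in `U` equals `T_rel`. -/
theorem enum_reliable_subseq (g : ContextFreeGrammarPoly.{uN} T) (U : Set T)
    (A₀ A : List (Symbol T g.NT)) (Trel Tgen : List T)
    (h : Relation.ReflTransGen (EnumStep g U) (A₀, [], Trel) (A, Tgen, [])) :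
    Tgen.filter (fun a => decide (a ∉ U)) = Trel := by
  simpa [EnumState.reliableTrace] using (EnumStep.reliableTrace_eq_of_reflTransGen h).symm
end
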